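/- arXiv:1206.1613 — 2 statements merged into one kernel-verified Lean document; each statement's English description precedes it below -/
import Mathlib

section
/- For every R > 0, the family indexed by nonzero lattice points n ∈ ℤ² \ {0} with terms (1/(π‖n‖²)) J₂(‖n‖√R) is absolutely summable; moreover there is a constant C such that the sum of the absolute values is at most C·R^{-1/4} for all R ≥ 1. -/
/-!
The phase `θ ↦ m θ - x sin θ` of the Bessel integral is convex on `[0, π]` and its derivative
vanishes only near `π / 2`. Van der Corput's first-derivative test on the two outer intervals and
the trivial bound on a window of width `2 / √x` give `|J_m(x)| = O(x^{-1/2})`. Hence the `n`-th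
term is `O(R^{-1/4} ‖n‖^{-5/2})`, which is summable over `ℤ²` since `5/2 > 2`.
-/

open Real MeasureTheory

/-- The Bessel function `J_m` for a nonnegative integer `m`,
defined by `J_m(x) = (1/π) ∫₀^π cos(mθ − x sin θ) dθ`. -/
noncomputable def besselJ (m : ℕ) (x : ℝ) : ℝ :=
  (1 / π) * ∫ θ in (0:ℝ)..π, Real.cos (m * θ - x * Real.sin θ)

/-- The Euclidean norm of a lattice point `n ∈ ℤ²`. -/
noncomputable def znorm (n : ℤ × ℤ) : ℝ :=
  Real.sqrt ((n.1 : ℝ) ^ 2 + (n.2 : ℝ) ^ 2)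

open Set intervalIntegral

theorem abs_integral_cos_le_of_deriv_nonneg {φ φ' φ'' : ℝ → ℝ} {a b l : ℝ} (hab : a ≤ b)
    (hφ : ∀ t ∈ Icc a b, HasDerivAt φ (φ' t) t) (hφ' : ∀ t ∈ Icc a b, HasDerivAt φ' (φ'' t) t)
    (hφ''_cont : ContinuousOn φ'' (Icc a b)) (hφ''_nonneg : ∀ t ∈ Icc a b, 0 ≤ φ'' t)
    (hl : 0 < l) (hφ'_ge : ∀ t ∈ Icc a b, l ≤ |φ' t|) :
    |∫ t in a..b, cos (φ t)| ≤ 4 / l := by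
  rw [← uIcc_of_le hab] at hφ hφ' hφ''_cont hφ''_nonneg hφ'_ge
  have hne : ∀ t ∈ uIcc a b, φ' t ≠ 0 := fun t ht h ↦ by
    have := hφ'_ge t ht; rw [h, abs_zero] at this; linarith
  have hinv : ∀ t ∈ uIcc a b, |1 / φ' t| ≤ 1 / l := fun t ht ↦ by
    rw [abs_div, abs_one]; exact one_div_le_one_div_of_le hl (hφ'_ge t ht)
  have hφ_cont : ContinuousOn φ (uIcc a b) := fun t ht ↦ (hφ t ht).continuousAt.continuousWithinAt
  have hφ'_cont : ContinuousOn φ' (uIcc a b) :=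
    fun t ht ↦ (hφ' t ht).continuousAt.continuousWithinAt
  have hw_cont : ContinuousOn (fun t ↦ φ'' t / φ' t ^ 2) (uIcc a b) :=
    hφ''_cont.div (hφ'_cont.pow 2) fun t ht ↦ pow_ne_zero 2 (hne t ht)
  have hcos_int : IntervalIntegrable (fun t ↦ cos (φ t)) volume a b :=
    (continuous_cos.comp_continuousOn hφ_cont).intervalIntegrable
  have hr_cont : ContinuousOn (fun t ↦ sin (φ t) * (φ'' t / φ' t ^ 2)) (uIcc a b) :=
    (continuous_sin.comp_continuousOn hφ_cont).mul hw_cont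
  -- `cos ∘ φ = (sin ∘ φ)' / φ'`, integrated by parts
  have hparts : ∫ t in a..b, cos (φ t) - sin (φ t) * (φ'' t / φ' t ^ 2) =
      sin (φ b) / φ' b - sin (φ a) / φ' a := by
    refine integral_eq_sub_of_hasDerivAt (f := fun t ↦ sin (φ t) / φ' t) (fun t ht ↦ ?_) ?_
    · refine ((hφ t ht).sin.div (hφ' t ht) (hne t ht)).congr_deriv ?_
      field_simp [hne t ht]
    · exact hcos_int.sub hr_cont.intervalIntegrable
  have hweight : ∫ t in a..b, φ'' t / φ' t ^ 2 = 1 / φ' a - 1 / φ' b := by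
    rw [integral_eq_sub_of_hasDerivAt (f := fun t ↦ -(1 / φ' t)) (f' := fun t ↦ φ'' t / φ' t ^ 2)
      (fun t ht ↦ ?_) hw_cont.intervalIntegrable]
    · ring
    · refine ((hasDerivAt_const t (1 : ℝ)).div (hφ' t ht) (hne t ht)).neg.congr_deriv ?_
      ring
  have hrem : |∫ t in a..b, sin (φ t) * (φ'' t / φ' t ^ 2)| ≤ 1 / φ' a - 1 / φ' b := by
    rw [← hweight]
    refine (abs_integral_le_integral_abs hab).trans
      (integral_mono_on hab hr_cont.intervalIntegrable.abs hw_cont.intervalIntegrable ?_)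
    intro t ht
    have hw_nonneg := div_nonneg (hφ''_nonneg t (Icc_subset_uIcc ht)) (sq_nonneg (φ' t))
    rw [abs_mul, abs_of_nonneg hw_nonneg]
    exact mul_le_of_le_one_left hw_nonneg (abs_sin_le_one _)
  have hboundary : ∀ t ∈ uIcc a b, |sin (φ t) / φ' t| ≤ 1 / l := fun t ht ↦ by
    rw [div_eq_mul_one_div, abs_mul]
    exact (mul_le_of_le_one_left (abs_nonneg _) (abs_sin_le_one _)).trans (hinv t ht)
  have ha := hinv a left_mem_uIcc
  have hb := hinv b right_mem_uIcc
  rw [integral_sub hcos_int hr_cont.intervalIntegrable, sub_eq_iff_eq_add] at hparts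
  rw [hparts]
  calc _ ≤ |sin (φ b) / φ' b| + |sin (φ a) / φ' a| + (1 / φ' a - 1 / φ' b) :=
        (abs_add_le _ _).trans (add_le_add (abs_sub _ _) hrem)
    _ ≤ 1 / l + 1 / l + (1 / l + 1 / l) := by
        gcongr
        · exact hboundary b right_mem_uIcc
        · exact hboundary a left_mem_uIcc
        · linarith [le_abs_self (1 / φ' a), neg_abs_le (1 / φ' b)]
    _ = 4 / l := by ring

theorem abs_besselJ_le_one (m : ℕ) (x : ℝ) : |besselJ m x| ≤ 1 := by
  have h := norm_integral_le_of_norm_le_const (a := 0) (b := π)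
    (f := fun θ ↦ cos (m * θ - x * sin θ)) (C := 1) fun θ _ ↦ abs_cos_le_one _
  rw [norm_eq_abs, one_mul, sub_zero, abs_of_pos pi_pos] at h
  rw [besselJ, abs_mul, abs_of_pos (one_div_pos.mpr pi_pos), one_div_mul_eq_div]
  exact div_le_one_of_le₀ h pi_pos.le

/-- The stationary point `arccos (m / x)` of the phase lies within `1 / √x` of `π / 2`;
outside that window the phase derivative `m - x cos θ` has size at least `√x / 4`. -/
theorem abs_integral_besselJ_le (m : ℕ) {x : ℝ} (hx : 0 < x) (hm : 4 * m + 1 ≤ √x) :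
    |∫ θ in (0:ℝ)..π, cos (m * θ - x * sin θ)| ≤ 34 / √x := by
  set s := √x
  have hs : 0 < s := sqrt_pos.mpr hx
  set δ := 1 / s
  have hδ : 0 < δ := by positivity
  have hδ1 : δ ≤ 1 := by rw [div_le_one hs]; linarith
  have hxδ : x * δ = s := by
    show x * (1 / s) = s
    rw [mul_one_div, div_eq_iff hs.ne', mul_self_sqrt hx.le]
  have hsin : s / 2 ≤ x * sin δ := by
    have h := mul_le_sin hδ.le (by linarith [pi_gt_three])
    have : 2 / π * δ ≥ δ / 2 := by
      rw [ge_iff_le, div_mul_eq_mul_div, le_div_iff₀ pi_pos]; nlinarith [pi_lt_four]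
    nlinarith
  have hφ (θ : ℝ) : HasDerivAt (fun θ ↦ m * θ - x * sin θ) (m - x * cos θ) θ := by
    simpa using ((hasDerivAt_id θ).const_mul (m : ℝ)).fun_sub ((hasDerivAt_sin θ).const_mul x)
  have hφ' (θ : ℝ) : HasDerivAt (fun θ ↦ m - x * cos θ) (x * sin θ) θ := by
    simpa using ((hasDerivAt_cos θ).const_mul x).const_sub (m : ℝ)
  have hφ'' : ∀ θ ∈ Icc (0:ℝ) π, 0 ≤ x * sin θ :=
    fun θ hθ ↦ mul_nonneg hx.le (sin_nonneg_of_nonneg_of_le_pi hθ.1 hθ.2)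
  have hleft : |∫ θ in (0:ℝ)..π / 2 - δ, cos (m * θ - x * sin θ)| ≤ 16 / s := by
    have hsub : Icc 0 (π / 2 - δ) ⊆ Icc 0 π := Icc_subset_Icc le_rfl (by linarith [pi_pos])
    convert abs_integral_cos_le_of_deriv_nonneg (by linarith [pi_gt_three]) (fun θ _ ↦ hφ θ)
      (fun θ _ ↦ hφ' θ) (by fun_prop) (fun θ hθ ↦ hφ'' θ (hsub hθ))
      (by positivity : 0 < s / 4) (fun θ hθ ↦ ?_) using 1
    · field_simp; norm_num
    have : cos (π / 2 - δ) ≤ cos θ :=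
      cos_le_cos_of_nonneg_of_le_pi hθ.1 (by linarith [pi_pos]) hθ.2
    rw [cos_pi_div_two_sub] at this
    rw [abs_of_neg (by nlinarith)]
    nlinarith
  have hright : |∫ θ in π / 2 + δ..π, cos (m * θ - x * sin θ)| ≤ 16 / s := by
    have hsub : Icc (π / 2 + δ) π ⊆ Icc 0 π := Icc_subset_Icc (by linarith [pi_pos]) le_rfl
    convert abs_integral_cos_le_of_deriv_nonneg (by linarith [pi_gt_three]) (fun θ _ ↦ hφ θ)
      (fun θ _ ↦ hφ' θ) (by fun_prop) (fun θ hθ ↦ hφ'' θ (hsub hθ))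
      (by positivity : 0 < s / 4) (fun θ hθ ↦ ?_) using 1
    · field_simp; norm_num
    have : cos θ ≤ cos (δ + π / 2) :=
      cos_le_cos_of_nonneg_of_le_pi (by linarith [pi_pos]) hθ.2 (by linarith [hθ.1])
    rw [cos_add_pi_div_two] at this
    rw [abs_of_pos (by nlinarith)]
    nlinarith
  have hmid : |∫ θ in π / 2 - δ..π / 2 + δ, cos (m * θ - x * sin θ)| ≤ 2 / s := by
    have h := norm_integral_le_of_norm_le_const (a := π / 2 - δ) (b := π / 2 + δ)
      (f := fun θ ↦ cos (m * θ - x * sin θ)) (C := 1) fun θ _ ↦ abs_cos_le_one _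
    rw [show π / 2 + δ - (π / 2 - δ) = 2 / s by ring, one_mul, abs_of_pos (by positivity)] at h
    exact h
  have hint : ∀ a b : ℝ, IntervalIntegrable (fun θ ↦ cos (m * θ - x * sin θ)) volume a b :=
    fun a b ↦ (by fun_prop : Continuous _).intervalIntegrable a b
  rw [← integral_add_adjacent_intervals (hint 0 (π / 2 - δ)) (hint _ π),
    ← integral_add_adjacent_intervals (hint _ (π / 2 + δ)) (hint _ π)]
  calc _ ≤ 16 / s + (2 / s + 16 / s) := by
        refine (abs_add_le _ _).trans (add_le_add hleft ((abs_add_le _ _).trans ?_))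
        exact add_le_add hmid hright
    _ = 34 / s := by ring

theorem abs_besselJ_le (m : ℕ) {x : ℝ} (hx : 0 < x) : |besselJ m x| ≤ (4 * m + 34) / √x := by
  have hs : 0 < √x := sqrt_pos.mpr hx
  rcases le_or_gt (4 * m + 1 : ℝ) √x with hm | hm
  · rw [besselJ, abs_mul, abs_of_pos (one_div_pos.mpr pi_pos)]
    calc _ ≤ 1 * (34 / √x) := by
          gcongr
          · exact (div_le_one pi_pos).mpr (by linarith [pi_gt_three])
          · exact abs_integral_besselJ_le m hx hm
      _ ≤ _ := by rw [one_mul]; gcongr; linarith [m.cast_nonneg (α := ℝ)]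
  · refine (abs_besselJ_le_one m x).trans ?_
    rw [le_div_iff₀ hs]
    linarith

theorem norm_le_znorm (n : ℤ × ℤ) : ‖n‖ ≤ znorm n := by
  rw [Prod.norm_def, Int.norm_eq_abs, Int.norm_eq_abs, znorm]
  apply max_le <;> rw [← sqrt_sq_eq_abs] <;> gcongr <;> nlinarith

theorem znorm_pos {n : ℤ × ℤ} (hn : n ≠ 0) : 0 < znorm n :=
  (norm_pos_iff.mpr hn).trans_le (norm_le_znorm n)

theorem summable_norm_rpow_neg_int_prod {k : ℝ} (hk : 2 < k) :
    Summable fun n : ℤ × ℤ ↦ ‖n‖ ^ (-k) := by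
  rw [← (finTwoArrowEquiv ℤ).summable_iff]
  refine (EisensteinSeries.summable_one_div_norm_rpow hk).congr fun v ↦ ?_
  simp [EisensteinSeries.norm_eq_max_natAbs, Prod.norm_def, Int.norm_eq_abs]

theorem summable_znorm_rpow_neg {k : ℝ} (hk : 2 < k) :
    Summable fun n : {n : ℤ × ℤ // n ≠ 0} ↦ znorm n.1 ^ (-k) :=
  ((summable_norm_rpow_neg_int_prod hk).subtype _).of_nonneg_of_le
    (fun n ↦ rpow_nonneg (znorm_pos n.2).le _)
    fun n ↦ rpow_le_rpow_of_nonpos (norm_pos_iff.mpr n.2) (norm_le_znorm n.1) (by linarith)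

theorem abs_one_div_mul_besselJ_le (m : ℕ) {z R : ℝ} (hz : 0 < z) (hR : 0 < R) :
    |(1 / (π * z ^ 2)) * besselJ m (z * √R)| ≤
      (4 * m + 34) / π * R ^ (-(1/4) : ℝ) * z ^ (-(5/2) : ℝ) := by
  have hJ := abs_besselJ_le m (mul_pos hz (sqrt_pos.mpr hR))
  rw [abs_mul, abs_of_pos (by positivity)]
  refine (mul_le_mul_of_nonneg_left hJ (by positivity)).trans_eq ?_
  have hsqrt : √(z * √R) = z ^ (1/2 : ℝ) * R ^ (1/4 : ℝ) := by
    rw [sqrt_eq_rpow, sqrt_eq_rpow, mul_rpow hz.le (by positivity), ← rpow_mul hR.le]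
    norm_num
  have hz52 : z ^ (-(5/2) : ℝ) = (z ^ 2 * z ^ (1/2 : ℝ))⁻¹ := by
    rw [rpow_neg hz.le, ← rpow_natCast, ← rpow_add hz]
    norm_num
  rw [hsqrt, hz52, rpow_neg hR.le]
  field_simp

/-- For every `R > 0` the family `(1/(π‖n‖²)) J₂(‖n‖√R)`, indexed by nonzero lattice
points `n ∈ ℤ² \ {0}`, is absolutely summable, and there is a constant `C` such that
the sum of absolute values is at most `C·R^(-1/4)` for all `R ≥ 1`. -/
theorem average_lattice_sum_absolutely_summable :
    (∀ R : ℝ, 0 < R →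
      Summable (fun n : {n : ℤ × ℤ // n ≠ 0} =>
        |(1 / (π * znorm n.1 ^ 2)) * besselJ 2 (znorm n.1 * Real.sqrt R)|)) ∧
    ∃ C : ℝ, ∀ R : ℝ, 1 ≤ R →
      (∑' n : {n : ℤ × ℤ // n ≠ 0},
          |(1 / (π * znorm n.1 ^ 2)) * besselJ 2 (znorm n.1 * Real.sqrt R)|)
        ≤ C * R ^ (-(1/4) : ℝ) := by
  set c : ℝ := (4 * (2 : ℕ) + 34) / π
  have hterm (R : ℝ) (hR : 0 < R) (n : {n : ℤ × ℤ // n ≠ 0}) :=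
    abs_one_div_mul_besselJ_le 2 (znorm_pos n.2) hR
  have hdom := summable_znorm_rpow_neg (k := 5/2) (by norm_num)
  have hsummable (R : ℝ) (hR : 0 < R) := Summable.of_nonneg_of_le (fun _ ↦ abs_nonneg _)
    (hterm R hR) (hdom.mul_left (c * R ^ (-(1/4) : ℝ)))
  refine ⟨hsummable, c * ∑' n : {n : ℤ × ℤ // n ≠ 0}, znorm n.1 ^ (-(5/2) : ℝ), fun R hR ↦ ?_⟩
  have hR : 0 < R := one_pos.trans_le hR
  calc _ ≤ ∑' n : {n : ℤ × ℤ // n ≠ 0}, c * R ^ (-(1/4) : ℝ) * znorm n.1 ^ (-(5/2) : ℝ) :=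
        (hsummable R hR).tsum_le_tsum (hterm R hR) (hdom.mul_left _)
    _ = _ := by rw [tsum_mul_left]; ring
end

section
/- For every t ≥ 0, |N_PP(t) − (1/4)·N_{T}(t) − 1/4| ≤ 1/2, where N_PP(t) = 1 + #{k ∈ ℤ : k > 0, k even and π²k² ≤ t} + #{j ∈ ℤ : j > 0, j even and π²j² ≤ t} + #{(j,k) ∈ ℤ² : j > 0, k > 0 and π²(j² + k²) ≤ t} and N_T(t) = #{(j,k) ∈ ℤ² : π²(j² + k²) ≤ t}. -/
open Real

/-- The eigenvalue counting function of the Laplacian on the flat projective plane. -/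
noncomputable def NPP (t : ℝ) : ℕ :=
  1 + Set.ncard {k : ℤ | 0 < k ∧ Even k ∧ π ^ 2 * (k : ℝ) ^ 2 ≤ t}
    + Set.ncard {j : ℤ | 0 < j ∧ Even j ∧ π ^ 2 * (j : ℝ) ^ 2 ≤ t}
    + Set.ncard {p : ℤ × ℤ | 0 < p.1 ∧ 0 < p.2 ∧
        π ^ 2 * ((p.1 : ℝ) ^ 2 + (p.2 : ℝ) ^ 2) ≤ t}

/-- The eigenvalue counting function of the Laplacian on the flat torus `[0,2] × [0,2]`. -/
noncomputable def NT22 (t : ℝ) : ℕ :=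
  Set.ncard {p : ℤ × ℤ | π ^ 2 * ((p.1 : ℝ) ^ 2 + (p.2 : ℝ) ^ 2) ≤ t}

-- split a finite set into three parts by sign of f
lemma ncard_split {α : Type*} (s : Set α) (hs : s.Finite) (f : α → ℤ) :
    s.ncard = {p ∈ s | f p < 0}.ncard + {p ∈ s | f p = 0}.ncard + {p ∈ s | 0 < f p}.ncard := by
  have e : s = ({p ∈ s | f p < 0} ∪ {p ∈ s | f p = 0}) ∪ {p ∈ s | 0 < f p} := by
    ext p
    constructor
    · intro hp
      rcases lt_trichotomy (f p) 0 with h | h | h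
      · exact Or.inl (Or.inl ⟨hp, h⟩)
      · exact Or.inl (Or.inr ⟨hp, h⟩)
      · exact Or.inr ⟨hp, h⟩
    · rintro ((⟨h, -⟩ | ⟨h, -⟩) | ⟨h, -⟩) <;> exact h
  have f1 : {p ∈ s | f p < 0}.Finite := hs.subset (Set.sep_subset _ _)
  have f2 : {p ∈ s | f p = 0}.Finite := hs.subset (Set.sep_subset _ _)
  have f3 : {p ∈ s | 0 < f p}.Finite := hs.subset (Set.sep_subset _ _)
  have d1 : Disjoint {p ∈ s | f p < 0} {p ∈ s | f p = 0} := by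
    rw [Set.disjoint_left]; rintro p ⟨-, h1⟩ ⟨-, h2⟩; omega
  have d2 : Disjoint ({p ∈ s | f p < 0} ∪ {p ∈ s | f p = 0}) {p ∈ s | 0 < f p} := by
    rw [Set.disjoint_left]; rintro p (⟨-, h1⟩ | ⟨-, h1⟩) ⟨-, h2⟩ <;> omega
  calc s.ncard = (({p ∈ s | f p < 0} ∪ {p ∈ s | f p = 0}) ∪ {p ∈ s | 0 < f p}).ncard := by rw [← e]
    _ = ({p ∈ s | f p < 0} ∪ {p ∈ s | f p = 0}).ncard + {p ∈ s | 0 < f p}.ncard := by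
        rw [Set.ncard_union_eq d2 (f1.union f2) f3]
    _ = _ := by rw [Set.ncard_union_eq d1 f1 f2]

/-- `N_PP(t) = (1/4) N_T(t) + 1/4 ± 1/2`. -/
theorem projective_plane_counting (t : ℝ) (ht : 0 ≤ t) :
    |(NPP t : ℝ) - (1 / 4) * (NT22 t : ℝ) - 1 / 4| ≤ 1 / 2 := by
  have hπ : (0:ℝ) < π := pi_pos
  set n : ℤ := ⌊Real.sqrt t / π⌋ with hn_def
  have hn0 : 0 ≤ n := Int.floor_nonneg.mpr (by positivity)
  have hk : ∀ k : ℤ, 0 < k → (π ^ 2 * (k : ℝ) ^ 2 ≤ t ↔ k ≤ n) := by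
    intro k hkpos
    have hkR : (0:ℝ) < (k:ℝ) := by exact_mod_cast hkpos
    have hsq : Real.sqrt t ^ 2 = t := Real.sq_sqrt ht
    have hs0 : 0 ≤ Real.sqrt t := Real.sqrt_nonneg t
    rw [hn_def, Int.le_floor]
    rw [le_div_iff₀ hπ]
    constructor
    · intro h
      nlinarith [mul_pos hkR hπ]
    · intro h
      nlinarith [mul_pos hkR hπ]
  have haux : ∀ j : ℤ, π ^ 2 * (j : ℝ) ^ 2 ≤ t → -n ≤ j ∧ j ≤ n := by
    intro j hj
    rcases eq_or_ne j 0 with rfl | hj0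
    · omega
    · have habs : 0 < |j| := abs_pos.mpr hj0
      have : π ^ 2 * ((|j| : ℤ) : ℝ) ^ 2 ≤ t := by
        rw [Int.cast_abs, sq_abs]; exact hj
      have h2 : |j| ≤ n := (hk _ habs).mp this
      exact ⟨neg_le_of_abs_le h2, le_of_abs_le h2⟩
  -- the main sets
  set S : Set (ℤ × ℤ) := {p : ℤ × ℤ | π ^ 2 * ((p.1 : ℝ) ^ 2 + (p.2 : ℝ) ^ 2) ≤ t} with hS_def
  set Bs : Set (ℤ × ℤ) := {p : ℤ × ℤ | 0 < p.1 ∧ 0 < p.2 ∧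
      π ^ 2 * ((p.1 : ℝ) ^ 2 + (p.2 : ℝ) ^ 2) ≤ t} with hBs_def
  set Cs : Set ℤ := {k : ℤ | 0 < k ∧ π ^ 2 * (k : ℝ) ^ 2 ≤ t} with hCs_def
  have hcoord : ∀ p : ℤ × ℤ, p ∈ S → π ^ 2 * (p.1 : ℝ) ^ 2 ≤ t ∧ π ^ 2 * (p.2 : ℝ) ^ 2 ≤ t := by
    rintro ⟨a, b⟩ hp
    simp only [hS_def, Set.mem_setOf_eq] at hp
    constructor <;> nlinarith [sq_nonneg (a : ℝ), sq_nonneg (b : ℝ), sq_nonneg π]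
  have hSfin : S.Finite := by
    apply Set.Finite.subset ((Finset.Icc (-n) n ×ˢ Finset.Icc (-n) n).finite_toSet)
    rintro ⟨a, b⟩ hp
    obtain ⟨h1, h2⟩ := hcoord _ hp
    simp only [Finset.coe_product, Set.mem_prod, Finset.mem_coe, Finset.mem_Icc]
    exact ⟨haux a h1, haux b h2⟩
  have hBfin : Bs.Finite := hSfin.subset (fun p hp => hp.2.2)
  -- cardinality of Cs
  have hC : Cs.ncard = n.toNat := by
    have : Cs = (Finset.Icc (1:ℤ) n : Set ℤ) := by
      ext k
      simp only [hCs_def, Set.mem_setOf_eq, Finset.coe_Icc, Set.mem_Icc]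
      constructor
      · rintro ⟨h1, h2⟩; exact ⟨h1, (hk k h1).mp h2⟩
      · rintro ⟨h1, h2⟩; exact ⟨h1, (hk k h1).mpr h2⟩
    rw [this, Set.ncard_coe_finset, Int.card_Icc]
    omega
  -- cardinality of the even set
  have hA : {k : ℤ | 0 < k ∧ Even k ∧ π ^ 2 * (k : ℝ) ^ 2 ≤ t}.ncard = (n / 2).toNat := by
    have : {k : ℤ | 0 < k ∧ Even k ∧ π ^ 2 * (k : ℝ) ^ 2 ≤ t}
        = ((Finset.Icc (1:ℤ) (n / 2)).image (fun m => 2 * m) : Set ℤ) := by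
      ext k
      simp only [Set.mem_setOf_eq, Finset.coe_image, Set.mem_image, Finset.coe_Icc, Set.mem_Icc,
        Int.even_iff]
      constructor
      · rintro ⟨h1, h2, h3⟩
        have h4 : k ≤ n := (hk k h1).mp h3
        exact ⟨k / 2, ⟨by omega, by omega⟩, by omega⟩
      · rintro ⟨m, ⟨hm1, hm2⟩, rfl⟩
        exact ⟨by omega, by omega, (hk _ (by omega)).mpr (by omega)⟩
    rw [this, Set.ncard_coe_finset, Finset.card_image_of_injective _
      (fun a b h => by omega), Int.card_Icc]
    omega
  -- the nine pieces
  have inj1 : Function.Injective (fun p : ℤ × ℤ => (-p.1, -p.2)) := by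
    intro p q h; simp only [Prod.mk.injEq, neg_inj] at h; exact Prod.ext h.1 h.2
  have inj2 : Function.Injective (fun p : ℤ × ℤ => (-p.1, p.2)) := by
    intro p q h; simp only [Prod.mk.injEq, neg_inj] at h; exact Prod.ext h.1 h.2
  have inj3 : Function.Injective (fun p : ℤ × ℤ => (p.1, -p.2)) := by
    intro p q h; simp only [Prod.mk.injEq, neg_inj] at h; exact Prod.ext h.1 h.2
  have inj4 : Function.Injective (fun k : ℤ => ((-k, 0) : ℤ × ℤ)) := by
    intro a b h; simpa using h
  have inj5 : Function.Injective (fun k : ℤ => ((k, 0) : ℤ × ℤ)) := by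
    intro a b h; simpa using h
  have inj6 : Function.Injective (fun k : ℤ => ((0, -k) : ℤ × ℤ)) := by
    intro a b h; simpa using h
  have inj7 : Function.Injective (fun k : ℤ => ((0, k) : ℤ × ℤ)) := by
    intro a b h; simpa using h
  have e1 : {p ∈ {p ∈ S | p.1 < 0} | p.2 < 0} = (fun p : ℤ × ℤ => (-p.1, -p.2)) '' Bs := by
    ext ⟨a, b⟩
    simp only [hS_def, hBs_def, Set.mem_setOf_eq, Set.mem_image, Prod.exists, Prod.mk.injEq]
    constructor
    · rintro ⟨⟨hP, ha⟩, hb⟩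
      refine ⟨-a, -b, ⟨by omega, by omega, ?_⟩, by omega, by omega⟩
      push_cast
      rw [neg_sq, neg_sq]
      exact hP
    · rintro ⟨x, y, ⟨hx, hy, hP⟩, h1, h2⟩
      refine ⟨⟨?_, by omega⟩, by omega⟩
      rw [← h1, ← h2]
      push_cast
      rw [neg_sq, neg_sq]
      exact hP
  have e2 : {p ∈ {p ∈ S | p.1 < 0} | p.2 = 0} = (fun k : ℤ => ((-k, 0) : ℤ × ℤ)) '' Cs := by
    ext ⟨a, b⟩
    simp only [hS_def, hCs_def, Set.mem_setOf_eq, Set.mem_image, Prod.mk.injEq]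
    constructor
    · rintro ⟨⟨hP, ha⟩, hb⟩
      subst hb
      refine ⟨-a, ⟨by omega, ?_⟩, by omega, rfl⟩
      push_cast
      push_cast at hP
      nlinarith
    · rintro ⟨x, ⟨hx, hP⟩, h1, h2⟩
      subst h2
      refine ⟨⟨?_, by omega⟩, rfl⟩
      rw [← h1]
      push_cast
      push_cast at hP
      nlinarith
  have e3 : {p ∈ {p ∈ S | p.1 < 0} | 0 < p.2} = (fun p : ℤ × ℤ => (-p.1, p.2)) '' Bs := by
    ext ⟨a, b⟩
    simp only [hS_def, hBs_def, Set.mem_setOf_eq, Set.mem_image, Prod.exists, Prod.mk.injEq]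
    constructor
    · rintro ⟨⟨hP, ha⟩, hb⟩
      refine ⟨-a, b, ⟨by omega, by omega, ?_⟩, by omega, rfl⟩
      push_cast
      rw [neg_sq]
      exact hP
    · rintro ⟨x, y, ⟨hx, hy, hP⟩, h1, h2⟩
      subst h2
      refine ⟨⟨?_, by omega⟩, by omega⟩
      rw [← h1]
      push_cast
      rw [neg_sq]
      exact hP
  have e4 : {p ∈ {p ∈ S | p.1 = 0} | p.2 < 0} = (fun k : ℤ => ((0, -k) : ℤ × ℤ)) '' Cs := by
    ext ⟨a, b⟩
    simp only [hS_def, hCs_def, Set.mem_setOf_eq, Set.mem_image, Prod.mk.injEq]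
    constructor
    · rintro ⟨⟨hP, ha⟩, hb⟩
      subst ha
      refine ⟨-b, ⟨by omega, ?_⟩, rfl, by omega⟩
      push_cast
      push_cast at hP
      nlinarith
    · rintro ⟨x, ⟨hx, hP⟩, h1, h2⟩
      subst h1
      refine ⟨⟨?_, rfl⟩, by omega⟩
      rw [← h2]
      push_cast
      push_cast at hP
      nlinarith
  have e5 : {p ∈ {p ∈ S | p.1 = 0} | p.2 = 0} = {((0 : ℤ), (0 : ℤ))} := by
    ext ⟨a, b⟩
    simp only [hS_def, Set.mem_setOf_eq, Set.mem_singleton_iff, Prod.mk.injEq]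
    constructor
    · rintro ⟨⟨hP, ha⟩, hb⟩
      exact ⟨ha, hb⟩
    · rintro ⟨rfl, rfl⟩
      refine ⟨⟨?_, rfl⟩, rfl⟩
      push_cast
      norm_num
      exact ht
  have e6 : {p ∈ {p ∈ S | p.1 = 0} | 0 < p.2} = (fun k : ℤ => ((0, k) : ℤ × ℤ)) '' Cs := by
    ext ⟨a, b⟩
    simp only [hS_def, hCs_def, Set.mem_setOf_eq, Set.mem_image, Prod.mk.injEq]
    constructor
    · rintro ⟨⟨hP, ha⟩, hb⟩
      subst ha
      refine ⟨b, ⟨by omega, ?_⟩, rfl, rfl⟩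
      push_cast
      push_cast at hP
      nlinarith
    · rintro ⟨x, ⟨hx, hP⟩, h1, h2⟩
      subst h1; subst h2
      refine ⟨⟨?_, rfl⟩, by omega⟩
      push_cast
      push_cast at hP
      nlinarith
  have e7 : {p ∈ {p ∈ S | 0 < p.1} | p.2 < 0} = (fun p : ℤ × ℤ => (p.1, -p.2)) '' Bs := by
    ext ⟨a, b⟩
    simp only [hS_def, hBs_def, Set.mem_setOf_eq, Set.mem_image, Prod.exists, Prod.mk.injEq]
    constructor
    · rintro ⟨⟨hP, ha⟩, hb⟩
      refine ⟨a, -b, ⟨by omega, by omega, ?_⟩, rfl, by omega⟩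
      push_cast
      rw [neg_sq]
      exact hP
    · rintro ⟨x, y, ⟨hx, hy, hP⟩, h1, h2⟩
      subst h1
      refine ⟨⟨?_, by omega⟩, by omega⟩
      rw [← h2]
      push_cast
      rw [neg_sq]
      exact hP
  have e8 : {p ∈ {p ∈ S | 0 < p.1} | p.2 = 0} = (fun k : ℤ => ((k, 0) : ℤ × ℤ)) '' Cs := by
    ext ⟨a, b⟩
    simp only [hS_def, hCs_def, Set.mem_setOf_eq, Set.mem_image, Prod.mk.injEq]
    constructor
    · rintro ⟨⟨hP, ha⟩, hb⟩
      subst hb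
      refine ⟨a, ⟨by omega, ?_⟩, rfl, rfl⟩
      push_cast
      push_cast at hP
      nlinarith
    · rintro ⟨x, ⟨hx, hP⟩, h1, h2⟩
      subst h1; subst h2
      refine ⟨⟨?_, by omega⟩, rfl⟩
      push_cast
      push_cast at hP
      nlinarith
  have e9 : {p ∈ {p ∈ S | 0 < p.1} | 0 < p.2} = Bs := by
    ext ⟨a, b⟩
    simp only [hS_def, hBs_def, Set.mem_setOf_eq]
    constructor
    · rintro ⟨⟨hP, ha⟩, hb⟩
      exact ⟨ha, hb, hP⟩
    · rintro ⟨ha, hb, hP⟩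
      exact ⟨⟨hP, ha⟩, hb⟩
  have hNT : NT22 t = 1 + 4 * Cs.ncard + 4 * Bs.ncard := by
    have h0 : NT22 t = S.ncard := rfl
    rw [h0, ncard_split S hSfin Prod.fst,
        ncard_split _ (hSfin.subset (Set.sep_subset _ _)) Prod.snd,
        ncard_split _ (hSfin.subset (Set.sep_subset _ _)) Prod.snd,
        ncard_split _ (hSfin.subset (Set.sep_subset _ _)) Prod.snd]
    rw [e1, e2, e3, e4, e5, e6, e7, e8, e9]
    rw [Set.ncard_image_of_injective _ inj1, Set.ncard_image_of_injective _ inj2,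
        Set.ncard_image_of_injective _ inj3, Set.ncard_image_of_injective _ inj4,
        Set.ncard_image_of_injective _ inj5, Set.ncard_image_of_injective _ inj6,
        Set.ncard_image_of_injective _ inj7, Set.ncard_singleton]
    ring
  have hNPP : NPP t = 1 + (n / 2).toNat + (n / 2).toNat + Bs.ncard := by
    show 1 + Set.ncard {k : ℤ | 0 < k ∧ Even k ∧ π ^ 2 * (k : ℝ) ^ 2 ≤ t}
      + Set.ncard {j : ℤ | 0 < j ∧ Even j ∧ π ^ 2 * (j : ℝ) ^ 2 ≤ t}
      + Set.ncard Bs = _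
    rw [hA]
  rw [hNPP, hNT, hC]
  have h2A : 2 * (n / 2).toNat = n.toNat ∨ 2 * (n / 2).toNat + 1 = n.toNat := by omega
  rw [abs_le]
  rcases h2A with h | h <;>
    constructor <;> push_cast [← h] <;> ring_nf <;> linarith
end
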